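/- arXiv:2602.09936 — 2 statements merged into one kernel-verified Lean document; each statement's English description precedes it below -/
import Mathlib

section
/- Let b1 > b2 > 0 and m ∈ ℝ. Let Y1 ~ b1·χ²_d and Y2 ~ b2·χ²_d be scaled chi-squared random variables with d degrees of freedom (not necessarily independent). Then P(Y1 - Y2 ≤ m) ≤ exp(m·(b1-b2)/(8·b1·b2)) · ρ^{d/4}, where ρ = 1 - ((b1-b2)/(b1+b2))² < 1. -/
/-!
Chernoff bound without independence: for `t ≥ 0`, Markov's inequality applied to
`exp (-t (Y1 - Y2 - m))` and Cauchy–Schwarz bound `P(Y1 - Y2 ≤ m)` by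
`exp (t m) · E[exp (-2t Y1)]^(1/2) · E[exp (2t Y2)]^(1/2)`, and the two factors are
chi-squared moment generating functions, `(1 + 4 t b1)^(-d/2)` and `(1 - 4 t b2)^(-d/2)`.
For `t = (b1 - b2) / (8 b1 b2)` these are `(2 b2 / (b1 + b2))^(d/2)` and
`(2 b1 / (b1 + b2))^(d/2)`, whose product is `ρ^(d/2)`.
Expectations are taken as lower Lebesgue integrals, so nothing needs to be known about
the joint law of `Y1` and `Y2`.
-/

open MeasureTheory ProbabilityTheory

/-- The law of `b` times the sum of squares of `d` i.i.d. standard normal random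
variables, i.e. the law of a `b`-scaled chi-squared variable with `d` degrees of
freedom. -/
noncomputable def scaledChiSq (d : ℕ) (b : ℝ) : Measure ℝ :=
  Measure.map (fun y : Fin d → ℝ => b * ∑ i, (y i) ^ 2)
    (Measure.pi fun _ : Fin d => gaussianReal 0 1)

open Real
open scoped ENNReal

lemma lintegral_fintype_prod_eq_pow {ι E : Type*} [Fintype ι] [MeasurableSpace E]
    {μ : Measure E} [IsProbabilityMeasure μ] {f : E → ℝ≥0∞} (hf : Measurable f) :
    ∫⁻ y : ι → E, ∏ i, f (y i) ∂Measure.pi (fun _ => μ) = (∫⁻ x, f x ∂μ) ^ Fintype.card ι := by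
  rw [lintegral_prod_eq_prod_lintegral_of_indepFun _ _
      (iIndepFun_pi (X := fun _ => f) fun _ => hf.aemeasurable)
      fun i => hf.comp (measurable_pi_apply i)]
  simp_rw [fun i => (measurePreserving_eval (fun _ : ι => μ) i).lintegral_comp hf]
  rw [Finset.prod_const, Finset.card_univ]

lemma lintegral_exp_mul_sq_gaussianReal {c : ℝ} (hc : c < 1 / 2) :
    ∫⁻ x, ENNReal.ofReal (exp (c * x ^ 2)) ∂gaussianReal 0 1 =
      ENNReal.ofReal ((1 - 2 * c)⁻¹ ^ (1 / 2 : ℝ)) := by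
  have hpos : 0 < 1 / 2 - c := by linarith
  have hdensity : ∀ x : ℝ, (gaussianPDF 0 1 * fun x => ENNReal.ofReal (exp (c * x ^ 2))) x
      = ENNReal.ofReal ((√(2 * π))⁻¹ * exp (-(1 / 2 - c) * x ^ 2)) := by
    intro x
    simp only [Pi.mul_apply, gaussianPDF, gaussianPDFReal]
    rw [← ENNReal.ofReal_mul (by positivity), mul_assoc, ← exp_add]
    norm_num
    ring_nf
  rw [gaussianReal_of_var_ne_zero 0 one_ne_zero,
    lintegral_withDensity_eq_lintegral_mul _ (measurable_gaussianPDF 0 1) (by fun_prop)]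
  simp_rw [hdensity]
  rw [← ofReal_integral_eq_lintegral_ofReal ((integrable_exp_neg_mul_sq hpos).const_mul _)
    (.of_forall fun x => by positivity), integral_const_mul, integral_gaussian,
    ← sqrt_eq_rpow, ← sqrt_inv, ← sqrt_mul (by positivity)]
  congr 1
  field_simp

lemma lintegral_exp_mul_scaledChiSq (d : ℕ) {b s : ℝ} (hs : s * b < 1 / 2) :
    ∫⁻ x, ENNReal.ofReal (exp (s * x)) ∂scaledChiSq d b =
      ENNReal.ofReal ((1 - 2 * (s * b))⁻¹ ^ (d / 2 : ℝ)) := by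
  have hpos : 0 < 1 - 2 * (s * b) := by linarith
  have hprod : ∀ y : Fin d → ℝ, ENNReal.ofReal (exp (s * (b * ∑ i, y i ^ 2))) =
      ∏ i, ENNReal.ofReal (exp (s * b * y i ^ 2)) := by
    intro y
    rw [← ENNReal.ofReal_prod_of_nonneg fun i _ => (exp_pos _).le, ← exp_sum, Finset.mul_sum,
      Finset.mul_sum]
    simp only [mul_assoc]
  rw [scaledChiSq, lintegral_map (by fun_prop) (by fun_prop)]
  simp_rw [hprod]
  rw [lintegral_fintype_prod_eq_pow (f := fun x => ENNReal.ofReal (exp (s * b * x ^ 2)))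
      (by fun_prop), lintegral_exp_mul_sq_gaussianReal hs, Fintype.card_fin,
    ← ENNReal.ofReal_pow (by positivity), ← rpow_mul_natCast (inv_pos.2 hpos).le]
  congr 2
  ring

section

variable {Ω : Type*} [MeasurableSpace Ω] {P : Measure Ω}

lemma lintegral_exp_mul_of_map_eq_scaledChiSq {Y : Ω → ℝ} (hYm : AEMeasurable Y P) {d : ℕ}
    {b : ℝ} (hY : P.map Y = scaledChiSq d b) {s : ℝ} (hs : s * b < 1 / 2) :
    ∫⁻ ω, ENNReal.ofReal (exp (s * Y ω)) ∂P =
      ENNReal.ofReal ((1 - 2 * (s * b))⁻¹ ^ (d / 2 : ℝ)) := by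
  rw [← lintegral_exp_mul_scaledChiSq d hs, ← hY, lintegral_map' (by fun_prop) hYm]

lemma measure_sub_le_le_exp_mul_lintegral {X Y : Ω → ℝ} (hX : AEMeasurable X P)
    (hY : AEMeasurable Y P) {t : ℝ} (ht : 0 ≤ t) (m : ℝ) :
    P {ω | X ω - Y ω ≤ m} ≤ ENNReal.ofReal (exp (t * m)) *
      ∫⁻ ω, ENNReal.ofReal (exp (-t * X ω)) * ENNReal.ofReal (exp (t * Y ω)) ∂P := by
  set ε := ENNReal.ofReal (exp (-t * m))
  have hsub : {ω | X ω - Y ω ≤ m} ⊆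
      {ω | ε ≤ ENNReal.ofReal (exp (-t * X ω)) * ENNReal.ofReal (exp (t * Y ω))} := by
    intro ω hω
    rw [Set.mem_ofPred_eq, ← ENNReal.ofReal_mul (exp_pos _).le, ← exp_add]
    exact ENNReal.ofReal_le_ofReal (exp_le_exp.2 (by nlinarith [hω.out]))
  have hε : ε⁻¹ = ENNReal.ofReal (exp (t * m)) := by
    rw [← ENNReal.ofReal_inv_of_pos (exp_pos _), ← exp_neg, neg_mul, neg_neg]
  calc P {ω | X ω - Y ω ≤ m} ≤ _ := measure_mono hsub
    _ ≤ (∫⁻ ω, ENNReal.ofReal (exp (-t * X ω)) * ENNReal.ofReal (exp (t * Y ω)) ∂P) / ε :=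
        meas_ge_le_lintegral_div (by fun_prop) (by positivity) ENNReal.ofReal_ne_top
    _ = _ := by rw [ENNReal.div_eq_inv_mul, hε]

lemma lintegral_ofReal_exp_mul_ofReal_exp_le {X Y : Ω → ℝ} (hX : AEMeasurable X P)
    (hY : AEMeasurable Y P) (s t : ℝ) :
    ∫⁻ ω, ENNReal.ofReal (exp (s * X ω)) * ENNReal.ofReal (exp (t * Y ω)) ∂P ≤
      (∫⁻ ω, ENNReal.ofReal (exp (2 * s * X ω)) ∂P) ^ (1 / 2 : ℝ) *
        (∫⁻ ω, ENNReal.ofReal (exp (2 * t * Y ω)) ∂P) ^ (1 / 2 : ℝ) := by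
  have hsq : ∀ u x : ℝ, ENNReal.ofReal (exp (u * x)) ^ (2 : ℝ) =
      ENNReal.ofReal (exp (2 * u * x)) := by
    intro u x
    rw [ENNReal.rpow_two, sq, ← ENNReal.ofReal_mul (exp_pos _).le, ← exp_add]
    ring_nf
  simpa only [hsq, one_div, Pi.mul_apply] using
    ENNReal.lintegral_mul_le_Lp_mul_Lq P .two_two (f := fun ω => ENNReal.ofReal (exp (s * X ω)))
      (g := fun ω => ENNReal.ofReal (exp (t * Y ω))) (by fun_prop) (by fun_prop)

lemma measure_sub_le_le_of_map_eq_scaledChiSq {Y1 Y2 : Ω → ℝ} (hY1m : AEMeasurable Y1 P)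
    (hY2m : AEMeasurable Y2 P) {d : ℕ} {b1 b2 : ℝ} (hY1 : P.map Y1 = scaledChiSq d b1)
    (hY2 : P.map Y2 = scaledChiSq d b2) {t : ℝ} (ht : 0 ≤ t) (htb1 : 0 < 1 + 4 * t * b1)
    (htb2 : 0 < 1 - 4 * t * b2) (m : ℝ) :
    P {ω | Y1 ω - Y2 ω ≤ m} ≤
      ENNReal.ofReal (exp (t * m) * ((1 + 4 * t * b1)⁻¹ * (1 - 4 * t * b2)⁻¹) ^ (d / 4 : ℝ)) := by
  have hA : 1 - 2 * (2 * -t * b1) = 1 + 4 * t * b1 := by ring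
  have hB : 1 - 2 * (2 * t * b2) = 1 - 4 * t * b2 := by ring
  calc P {ω | Y1 ω - Y2 ω ≤ m}
      ≤ ENNReal.ofReal (exp (t * m)) *
        ∫⁻ ω, ENNReal.ofReal (exp (-t * Y1 ω)) * ENNReal.ofReal (exp (t * Y2 ω)) ∂P :=
        measure_sub_le_le_exp_mul_lintegral hY1m hY2m ht m
    _ ≤ ENNReal.ofReal (exp (t * m)) *
        ((∫⁻ ω, ENNReal.ofReal (exp (2 * -t * Y1 ω)) ∂P) ^ (1 / 2 : ℝ) *
          (∫⁻ ω, ENNReal.ofReal (exp (2 * t * Y2 ω)) ∂P) ^ (1 / 2 : ℝ)) := by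
        gcongr
        exact lintegral_ofReal_exp_mul_ofReal_exp_le hY1m hY2m _ _
    _ = _ := by
        rw [lintegral_exp_mul_of_map_eq_scaledChiSq hY1m hY1 (by linarith),
          lintegral_exp_mul_of_map_eq_scaledChiSq hY2m hY2 (by linarith), hA, hB,
          ENNReal.ofReal_rpow_of_nonneg (x := (1 + 4 * t * b1)⁻¹ ^ (d / 2 : ℝ)) (by positivity)
            (by norm_num),
          ENNReal.ofReal_rpow_of_nonneg (x := (1 - 4 * t * b2)⁻¹ ^ (d / 2 : ℝ)) (by positivity)
            (by norm_num), ← rpow_mul (by positivity), ← rpow_mul (by positivity),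
          ← ENNReal.ofReal_mul (by positivity), ← ENNReal.ofReal_mul (by positivity),
          ← mul_rpow (by positivity) (by positivity)]
        congr 3
        ring

end

theorem stmt_0_general {Ω : Type*} [MeasurableSpace Ω] (P : Measure Ω)
    (d : ℕ) (b1 b2 m : ℝ) (hb2 : 0 < b2) (hb : b2 < b1)
    (Y1 Y2 : Ω → ℝ) (hY1m : Measurable Y1) (hY2m : Measurable Y2)
    (hY1 : Measure.map Y1 P = scaledChiSq d b1)
    (hY2 : Measure.map Y2 P = scaledChiSq d b2) :
    1 - ((b1 - b2) / (b1 + b2)) ^ 2 < 1 ∧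
    P {ω | Y1 ω - Y2 ω ≤ m} ≤
      ENNReal.ofReal (Real.exp (m * (b1 - b2) / (8 * b1 * b2)) *
        (1 - ((b1 - b2) / (b1 + b2)) ^ 2) ^ ((d : ℝ) / 4)) := by
  have hb1 : 0 < b1 := hb2.trans hb
  have hsum : 0 < b1 + b2 := by positivity
  refine ⟨by nlinarith [show 0 < ((b1 - b2) / (b1 + b2)) ^ 2 by positivity], ?_⟩
  set t := (b1 - b2) / (8 * b1 * b2) with ht_def
  have hA : 1 + 4 * t * b1 = (b1 + b2) / (2 * b2) := by rw [ht_def]; field_simp; ring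
  have hB : 1 - 4 * t * b2 = (b1 + b2) / (2 * b1) := by rw [ht_def]; field_simp; ring
  have hρ : 1 - ((b1 - b2) / (b1 + b2)) ^ 2 = 2 * b2 / (b1 + b2) * (2 * b1 / (b1 + b2)) := by
    field_simp; ring
  convert measure_sub_le_le_of_map_eq_scaledChiSq hY1m.aemeasurable hY2m.aemeasurable hY1 hY2
    (t := t) (by positivity) (by rw [hA]; positivity) (by rw [hB]; positivity) m using 3
  · congr 1; ring
  · rw [hA, hB, inv_div, inv_div, hρ]

/-- Let `b1 > b2 > 0`, `m ∈ ℝ`, and let `Y1 ~ b1·χ²_d`, `Y2 ~ b2·χ²_d`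
(not necessarily independent) on a common probability space. Then
`P(Y1 - Y2 ≤ m) ≤ exp(m·(b1-b2)/(8·b1·b2)) · ρ^{d/4}`, where
`ρ = 1 - ((b1-b2)/(b1+b2))² < 1`. -/
theorem stmt_0 {Ω : Type*} [MeasurableSpace Ω] (P : Measure Ω) [IsProbabilityMeasure P]
    (d : ℕ) (b1 b2 m : ℝ) (hb2 : 0 < b2) (hb : b2 < b1)
    (Y1 Y2 : Ω → ℝ) (hY1m : Measurable Y1) (hY2m : Measurable Y2)
    (hY1 : Measure.map Y1 P = scaledChiSq d b1)
    (hY2 : Measure.map Y2 P = scaledChiSq d b2) :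
    1 - ((b1 - b2) / (b1 + b2)) ^ 2 < 1 ∧
    P {ω | Y1 ω - Y2 ω ≤ m} ≤
      ENNReal.ofReal (Real.exp (m * (b1 - b2) / (8 * b1 * b2)) *
        (1 - ((b1 - b2) / (b1 + b2)) ^ 2) ^ ((d : ℝ) / 4)) :=
  stmt_0_general P d b1 b2 m hb2 hb Y1 Y2 hY1m hY2m hY1 hY2
end

section
/- Let {C_1, C_2} be a bipartition of [n], n ≥ 4, that is not equal (up to swapping the two clusters) to the ground-truth bipartition {S_1^⋆, S_2^⋆}, with both clusters and both classes nonempty. Then there exist an index j ∈ {1,2} and a class ℓ ∈ {1,2} such that: (i) C_j contains points of both classes (0 < R^ℓ_j < 1), (ii) R^ℓ_j ≤ R^ℓ where R^ℓ = |S_ℓ^⋆|/n, and consequently (iii) R^ℓ_{j̄} ≥ R^ℓ, where R^ℓ_k = |C_k ∩ S_ℓ^⋆|/|C_k|. In particular R^ℓ_j ≤ R^ℓ ≤ R^ℓ_{j̄} and C_j ∩ S_ℓ^⋆ ≠ ∅. -/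
/-!
If no cluster contained points of both classes, each cluster would lie inside a single class,
which forces the clustering to be the ground truth (up to swap) or a class to be empty. In a
mixed cluster `C j` the proportions satisfy `R⁰_j + R¹_j = 1 = R⁰ + R¹`, so some class `ℓ` has
`R^ℓ_j ≤ R^ℓ`. Since `R^ℓ` is the mediant of `R^ℓ_j` and `R^ℓ_{j+1}`, it lies between them.
-/

open Finset

section Bipartition

variable {α : Type*} [Fintype α] [DecidableEq α]

lemma bipartition_succ_eq_compl {P : Fin 2 → Finset α} (hdisj : Disjoint (P 0) (P 1))
    (hcover : P 0 ∪ P 1 = univ) (j : Fin 2) : P (j + 1) = (P j)ᶜ := by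
  have hcompl : IsCompl (P 0) (P 1) := ⟨hdisj, codisjoint_iff.2 hcover⟩
  fin_cases j
  · exact eq_compl_iff_isCompl.2 hcompl.symm
  · exact eq_compl_iff_isCompl.2 hcompl

lemma card_inter_add_card_inter_succ {P : Fin 2 → Finset α} (hdisj : Disjoint (P 0) (P 1))
    (hcover : P 0 ∪ P 1 = univ) (T : Finset α) (j : Fin 2) :
    #(T ∩ P j) + #(T ∩ P (j + 1)) = #T := by
  rw [bipartition_succ_eq_compl hdisj hcover, ← sdiff_eq_inter_compl, card_inter_add_card_sdiff]

lemma subset_or_subset_compl_of_not_mixed {X B : Finset α}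
    (h : ¬((X ∩ B).Nonempty ∧ (X ∩ Bᶜ).Nonempty)) : X ⊆ B ∨ X ⊆ Bᶜ := by
  rwa [not_and_or, ← not_disjoint_iff_nonempty_inter, ← not_disjoint_iff_nonempty_inter, not_not,
    not_not, ← subset_compl_iff_disjoint_right, ← subset_compl_iff_disjoint_right, compl_compl,
    or_comm] at h

lemma mixed_or_compl_mixed {A B : Finset α} (hAB : A ≠ B) (hABc : A ≠ Bᶜ)
    (hB : B.Nonempty) (hBc : Bᶜ.Nonempty) :
    ((A ∩ B).Nonempty ∧ (A ∩ Bᶜ).Nonempty) ∨ ((Aᶜ ∩ B).Nonempty ∧ (Aᶜ ∩ Bᶜ).Nonempty) := by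
  by_contra h
  rw [not_or] at h
  rcases subset_or_subset_compl_of_not_mixed h.1 with hA | hA <;>
    rcases subset_or_subset_compl_of_not_mixed h.2 with hAc | hAc
  · obtain ⟨x, hx⟩ := hBc
    exact mem_compl.1 hx (hA (compl_le_iff_compl_le.1 hAc hx))
  · exact hAB (hA.antisymm (compl_subset_compl.1 hAc))
  · exact hABc (hA.antisymm (compl_le_iff_compl_le.1 hAc))
  · obtain ⟨x, hx⟩ := hB
    exact mem_compl.1 (hA (compl_subset_compl.1 hAc hx)) hx

lemma exists_forall_inter_nonempty {C S : Fin 2 → Finset α}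
    (hCdisj : Disjoint (C 0) (C 1)) (hCcover : C 0 ∪ C 1 = univ)
    (hSdisj : Disjoint (S 0) (S 1)) (hScover : S 0 ∪ S 1 = univ) (hSne : ∀ ℓ, (S ℓ).Nonempty)
    (hincorrect : ¬ ((C 0 = S 0 ∧ C 1 = S 1) ∨ (C 0 = S 1 ∧ C 1 = S 0))) :
    ∃ j, ∀ ℓ, (C j ∩ S ℓ).Nonempty := by
  have hC1 : C 1 = (C 0)ᶜ := bipartition_succ_eq_compl hCdisj hCcover 0
  have hS1 : S 1 = (S 0)ᶜ := bipartition_succ_eq_compl hSdisj hScover 0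
  rw [Fin.exists_fin_two, Fin.forall_fin_two, Fin.forall_fin_two, hC1, hS1]
  refine mixed_or_compl_mixed (fun h => hincorrect (Or.inl ⟨h, by rw [hC1, hS1, h]⟩))
    (fun h => hincorrect (Or.inr ⟨by rw [hS1, h], by rw [hC1, h, compl_compl]⟩))
    (hSne 0) (hS1 ▸ hSne 1)

lemma exists_card_inter_mul_le {S : Fin 2 → Finset α}
    (hSdisj : Disjoint (S 0) (S 1)) (hScover : S 0 ∪ S 1 = univ) (T : Finset α) :
    ∃ ℓ, #(T ∩ S ℓ) * Fintype.card α ≤ #(S ℓ) * #T := by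
  have hT := card_inter_add_card_inter_succ hSdisj hScover T 0
  have hS := card_inter_add_card_inter_succ hSdisj hScover univ 0
  simp only [univ_inter, card_univ, zero_add] at hS
  simp only [zero_add] at hT
  -- both sides sum over `ℓ` to `#T * card α`
  obtain ⟨ℓ, -, hℓ⟩ := exists_le_of_sum_le (s := univ)
    (f := fun ℓ => #(T ∩ S ℓ) * Fintype.card α) (g := fun ℓ => #(S ℓ) * #T) univ_nonempty
    (by rw [Fin.sum_univ_two, Fin.sum_univ_two, ← add_mul, ← add_mul, hT, hS, mul_comm])
  exact ⟨ℓ, hℓ⟩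

end Bipartition

lemma mediant_le_div_of_div_le_mediant {K : Type*} [Field K] [LinearOrder K] [IsStrictOrderedRing K]
    {a a' c c' : K} (hc : 0 < c) (hc' : 0 < c') (h : a / c ≤ (a + a') / (c + c')) :
    (a + a') / (c + c') ≤ a' / c' := by
  rw [div_le_div_iff₀ hc (by positivity)] at h
  rw [div_le_div_iff₀ (by positivity) hc']
  linarith

theorem stmt_16_general (n : ℕ) (C S : Fin 2 → Finset (Fin n))
    (hCdisj : Disjoint (C 0) (C 1)) (hCcover : C 0 ∪ C 1 = Finset.univ)
    (hCne : ∀ j, (C j).Nonempty)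
    (hSdisj : Disjoint (S 0) (S 1)) (hScover : S 0 ∪ S 1 = Finset.univ)
    (hSne : ∀ ℓ, (S ℓ).Nonempty)
    (hincorrect : ¬ ((C 0 = S 0 ∧ C 1 = S 1) ∨ (C 0 = S 1 ∧ C 1 = S 0))) :
    ∃ j ℓ : Fin 2,
      0 < (((C j ∩ S ℓ).card : ℝ) / ((C j).card : ℝ)) ∧
      (((C j ∩ S ℓ).card : ℝ) / ((C j).card : ℝ)) < 1 ∧
      (((C j ∩ S ℓ).card : ℝ) / ((C j).card : ℝ)) ≤ ((S ℓ).card : ℝ) / (n : ℝ) ∧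
      ((S ℓ).card : ℝ) / (n : ℝ) ≤
        (((C (j + 1) ∩ S ℓ).card : ℝ) / ((C (j + 1)).card : ℝ)) ∧
      (C j ∩ S ℓ).Nonempty := by
  obtain ⟨j, hmixed⟩ := exists_forall_inter_nonempty hCdisj hCcover hSdisj hScover hSne hincorrect
  obtain ⟨ℓ, hle⟩ := exists_card_inter_mul_le hSdisj hScover (C j)
  rw [Fintype.card_fin] at hle
  have hrow := card_inter_add_card_inter_succ hSdisj hScover (C j) ℓ
  have hcol := card_inter_add_card_inter_succ hCdisj hCcover (S ℓ) j
  have hn := card_inter_add_card_inter_succ hCdisj hCcover univ j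
  simp only [univ_inter, card_univ, Fintype.card_fin] at hn
  rw [inter_comm (S ℓ), inter_comm (S ℓ)] at hcol
  have hnR : (#(C j) : ℝ) + #(C (j + 1)) = n := by exact_mod_cast hn
  have hcolR : (#(C j ∩ S ℓ) : ℝ) + #(C (j + 1) ∩ S ℓ) = #(S ℓ) := by exact_mod_cast hcol
  have hc : (0 : ℝ) < #(C j) := by exact_mod_cast (hCne j).card_pos
  have hc' : (0 : ℝ) < #(C (j + 1)) := by exact_mod_cast (hCne (j + 1)).card_pos
  have ha : (0 : ℝ) < #(C j ∩ S ℓ) := by exact_mod_cast (hmixed ℓ).card_pos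
  have hb : (0 : ℝ) < #(C j ∩ S (ℓ + 1)) := by exact_mod_cast (hmixed (ℓ + 1)).card_pos
  have hrowR : (#(C j ∩ S ℓ) : ℝ) + #(C j ∩ S (ℓ + 1)) = #(C j) := by exact_mod_cast hrow
  have hle' : #(C j ∩ S ℓ) / #(C j) ≤ (#(S ℓ) : ℝ) / n := by
    rw [div_le_div_iff₀ hc (by linarith)]
    exact_mod_cast hle
  refine ⟨j, ℓ, by positivity, (div_lt_one hc).2 (by linarith), hle', ?_, hmixed ℓ⟩
  rw [← hcolR, ← hnR] at hle' ⊢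
  exact mediant_le_div_of_div_le_mediant hc hc' hle'

/-- Let `{C 0, C 1}` be a bipartition of `[n]`, `n ≥ 4`, not equal (up
to swap) to the ground-truth bipartition `{S 0, S 1}`, all four sets nonempty. Then
there exist a cluster index `j` and a class `ℓ` such that `C j` is mixed
(`0 < R^ℓ_j < 1`), `R^ℓ_j ≤ R^ℓ ≤ R^ℓ_{j̄}`, and `C j ∩ S ℓ ≠ ∅`. -/
theorem stmt_16 (n : ℕ) (hn : 4 ≤ n) (C S : Fin 2 → Finset (Fin n))
    (hCdisj : Disjoint (C 0) (C 1)) (hCcover : C 0 ∪ C 1 = Finset.univ)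
    (hCne : ∀ j, (C j).Nonempty)
    (hSdisj : Disjoint (S 0) (S 1)) (hScover : S 0 ∪ S 1 = Finset.univ)
    (hSne : ∀ ℓ, (S ℓ).Nonempty)
    (hincorrect : ¬ ((C 0 = S 0 ∧ C 1 = S 1) ∨ (C 0 = S 1 ∧ C 1 = S 0))) :
    ∃ j ℓ : Fin 2,
      0 < (((C j ∩ S ℓ).card : ℝ) / ((C j).card : ℝ)) ∧
      (((C j ∩ S ℓ).card : ℝ) / ((C j).card : ℝ)) < 1 ∧
      (((C j ∩ S ℓ).card : ℝ) / ((C j).card : ℝ)) ≤ ((S ℓ).card : ℝ) / (n : ℝ) ∧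
      ((S ℓ).card : ℝ) / (n : ℝ) ≤
        (((C (j + 1) ∩ S ℓ).card : ℝ) / ((C (j + 1)).card : ℝ)) ∧
      (C j ∩ S ℓ).Nonempty :=
  stmt_16_general n C S hCdisj hCcover hCne hSdisj hScover hSne hincorrect
end
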